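/- arXiv:2401.04816 — 2 statements merged into one kernel-verified Lean document; each statement's English description precedes it below -/
import Mathlib

section
/- Let T>0, μ≥1, M≥1, λ>0, and define on (0,T): α(t) = (t(T−t))^{-1}(e^{μ} − e^{2μM}), φ(t) = (t(T−t))^{-1} e^{μ}, θ(t) = e^{λα(t)}. If λ ≥ T², then |d/dt (θ(t)² φ(t))| ≤ C T λ θ(t)² φ(t)³ for all t ∈ (0,T), where C is a constant depending only on μ and M. -/
/-! With `g s = s * (T - s)` and `a = e^μ - e^{2μM}`, the derivative of `θ² φ` is
`-θ² e^μ g' (2λa + g) / g³`. Since `|g'| ≤ T` and `0 < g ≤ T² ≤ λ`, we get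
`|2λa + g| ≤ λ (2|a| + 1)`, and `C = (2|a| + 1) e^{-2μ}` turns `e^μ / g³` into `φ³`. -/

open Real

theorem hasDerivAt_mul_sub_self (T t : ℝ) :
    HasDerivAt (fun s : ℝ => s * (T - s)) (T - 2 * t) t :=
  ((hasDerivAt_id t).mul ((hasDerivAt_const t T).sub (hasDerivAt_id t))).congr_deriv (by
    simp only [id, Pi.sub_apply]; ring)

theorem HasDerivAt.exp_mul_div_sq_mul_div {g : ℝ → ℝ} {g' t : ℝ} (hg : HasDerivAt g g' t)
    (hgt : g t ≠ 0) (lam a b : ℝ) :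
    HasDerivAt (fun s => Real.exp (lam * (a / g s)) ^ 2 * (b / g s))
      (-(Real.exp (lam * (a / g t)) ^ 2 * b * g' * (2 * lam * a + g t) / g t ^ 3)) t := by
  have hexp := (((hasDerivAt_const t a).div hg hgt).const_mul lam).exp
  refine ((hexp.pow 2).mul ((hasDerivAt_const t b).div hg hgt)).congr_deriv ?_
  simp only [Pi.div_apply, Pi.pow_apply]
  field_simp
  ring

theorem abs_two_mul_mul_add_le {lam a g : ℝ} (hg : 0 ≤ g) (hgl : g ≤ lam) :
    |2 * lam * a + g| ≤ lam * (2 * |a| + 1) := by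
  calc |2 * lam * a + g| ≤ |2 * lam * a| + |g| := abs_add_le _ _
    _ = 2 * lam * |a| + g := by
        rw [abs_mul, abs_of_nonneg (by linarith : 0 ≤ 2 * lam), abs_of_nonneg hg]
    _ ≤ lam * (2 * |a| + 1) := by linarith

theorem stmt_5_general (μ M : ℝ) :
    ∃ C > (0:ℝ), ∀ T > (0:ℝ), ∀ lam > (0:ℝ), T ^ 2 ≤ lam →
      ∀ t ∈ Set.Ioo (0:ℝ) T,
        |deriv (fun s : ℝ =>
            (Real.exp (lam * ((Real.exp μ - Real.exp (2 * μ * M)) / (s * (T - s))))) ^ 2 *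
              (Real.exp μ / (s * (T - s)))) t|
          ≤ C * T * lam *
              (Real.exp (lam * ((Real.exp μ - Real.exp (2 * μ * M)) / (t * (T - t))))) ^ 2 *
              (Real.exp μ / (t * (T - t))) ^ 3 := by
  set A := exp μ - exp (2 * μ * M)
  refine ⟨(2 * |A| + 1) / exp μ ^ 2, by positivity, ?_⟩
  rintro T hT lam - hTlam t ⟨ht0, htT⟩
  have hg : 0 < t * (T - t) := mul_pos ht0 (by linarith)
  have hgl : t * (T - t) ≤ lam := by nlinarith
  have hg' : |T - 2 * t| ≤ T := abs_le.mpr ⟨by linarith, by linarith⟩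
  rw [((hasDerivAt_mul_sub_self T t).exp_mul_div_sq_mul_div hg.ne' lam A (exp μ)).deriv,
    abs_neg, abs_div, abs_mul, abs_mul, abs_mul, abs_of_pos (pow_pos hg 3),
    abs_of_pos (exp_pos μ), abs_of_nonneg (sq_nonneg _)]
  calc exp (lam * (A / (t * (T - t)))) ^ 2 * exp μ * |T - 2 * t| *
        |2 * lam * A + t * (T - t)| / (t * (T - t)) ^ 3
      ≤ exp (lam * (A / (t * (T - t)))) ^ 2 * exp μ * T *
        (lam * (2 * |A| + 1)) / (t * (T - t)) ^ 3 := by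
        gcongr
        exact abs_two_mul_mul_add_le hg.le hgl
    _ = (2 * |A| + 1) / exp μ ^ 2 * T * lam * exp (lam * (A / (t * (T - t)))) ^ 2 *
        (exp μ / (t * (T - t))) ^ 3 := by
        field_simp

theorem stmt_5 (μ M : ℝ) (hμ : 1 ≤ μ) (hM : 1 ≤ M) :
    ∃ C > (0:ℝ), ∀ T > (0:ℝ), ∀ lam > (0:ℝ), T ^ 2 ≤ lam →
      ∀ t ∈ Set.Ioo (0:ℝ) T,
        |deriv (fun s : ℝ =>
            (Real.exp (lam * ((Real.exp μ - Real.exp (2 * μ * M)) / (s * (T - s))))) ^ 2 *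
              (Real.exp μ / (s * (T - s)))) t|
          ≤ C * T * lam *
              (Real.exp (lam * ((Real.exp μ - Real.exp (2 * μ * M)) / (t * (T - t))))) ^ 2 *
              (Real.exp μ / (t * (T - t))) ^ 3 :=
  stmt_5_general μ M
end

section
/- (Strictly convex coercive functionals have unique minimizers.) Let H be a real Hilbert space and J : H → ℝ a continuous, strictly convex function that is coercive (J(u) → ∞ as ‖u‖ → ∞). Then J attains its infimum at a unique point of H. -/
/-!
Sublevel sets of a continuous convex function are closed and convex, hence weakly closed, so the
function is weakly lower semicontinuous. Coercivity makes the sublevel set `{J ≤ J 0}` bounded, and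
in a Hilbert space a bounded closed convex set is weakly compact (Riesz representation and
Banach–Alaoglu), so `J` attains its minimum on it, which is then a global minimum. Strict convexity
makes the minimizer unique.
-/

open Set Metric Filter Bornology

section LocallyConvex

variable {E : Type*} [AddCommGroup E] [Module ℝ E] [TopologicalSpace E] [IsTopologicalAddGroup E]
  [ContinuousSMul ℝ E] [LocallyConvexSpace ℝ E]

theorem Convex.isClosed_toWeakSpace_image {s : Set E} (hs : Convex ℝ s) (hc : IsClosed s) :
    IsClosed (toWeakSpace ℝ E '' s) := by
  rw [← closure_eq_iff_isClosed, ← hs.toWeakSpace_closure ℝ, hc.closure_eq]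

theorem ConvexOn.lowerSemicontinuous_comp_toWeakSpace_symm {f : E → ℝ} (hf : ConvexOn ℝ univ f)
    (hc : Continuous f) : LowerSemicontinuous (f ∘ (toWeakSpace ℝ E).symm) := by
  refine lowerSemicontinuous_iff_isClosed_preimage.2 fun y => ?_
  rw [preimage_comp, ← LinearEquiv.image_eq_preimage_symm]
  have hconv : Convex ℝ {x | f x ≤ y} := by simpa only [mem_univ, true_and] using hf.convex_le y
  exact hconv.isClosed_toWeakSpace_image (isClosed_le hc continuous_const)

end LocallyConvex

namespace InnerProductSpace

variable {H : Type*} [NormedAddCommGroup H] [InnerProductSpace ℝ H] [CompleteSpace H]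

theorem isCompact_toWeakSpace_closedBall (r : ℝ) :
    IsCompact (toWeakSpace ℝ H '' closedBall 0 r) := by
  set φ : WeakDual ℝ H → WeakSpace ℝ H :=
    fun f => toWeakSpace ℝ H ((toDual ℝ H).symm (WeakDual.toStrongDual f))
  -- `ℓ (φ f) = f (toDual.symm ℓ)`: each weak functional of `φ f` is a weak-star evaluation of `f`
  have hφ : Continuous φ := by
    refine WeakBilin.continuous_of_continuous_eval _ fun ℓ => ?_
    convert WeakDual.eval_continuous ((toDual ℝ H).symm ℓ) using 1
    ext f
    change ℓ ((toDual ℝ H).symm (WeakDual.toStrongDual f)) = f ((toDual ℝ H).symm ℓ)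
    conv_lhs => rw [← (toDual ℝ H).apply_symm_apply ℓ]
    rw [toDual_apply_apply, real_inner_comm, ← toDual_apply_apply,
      LinearIsometryEquiv.apply_symm_apply]
    rfl
  have hball :
      φ '' (WeakDual.toStrongDual ⁻¹' closedBall 0 r) = toWeakSpace ℝ H '' closedBall 0 r := by
    ext x
    simp only [φ, mem_image, mem_preimage, mem_closedBall_zero_iff]
    constructor
    · rintro ⟨f, hf, rfl⟩
      exact ⟨_, by rwa [LinearIsometryEquiv.norm_map], rfl⟩
    · rintro ⟨u, hu, rfl⟩
      exact ⟨StrongDual.toWeakDual (toDual ℝ H u), by simpa using hu, by simp⟩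
  exact hball ▸ (WeakDual.isCompact_closedBall 0 r).image hφ

theorem isCompact_toWeakSpace_image {s : Set H} (hb : IsBounded s) (hs : Convex ℝ s)
    (hc : IsClosed s) : IsCompact (toWeakSpace ℝ H '' s) := by
  obtain ⟨r, hr⟩ := hb.subset_closedBall 0
  exact (isCompact_toWeakSpace_closedBall r).of_isClosed_subset (hs.isClosed_toWeakSpace_image hc)
    (image_mono hr)

theorem _root_.ConvexOn.exists_forall_le_of_tendsto_cobounded {J : H → ℝ}
    (hJ : ConvexOn ℝ univ J) (hc : Continuous J) (hcoer : Tendsto J (cobounded H) atTop) :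
    ∃ u, ∀ v, J u ≤ J v := by
  set S := {u | J u ≤ J 0}
  have hSb : IsBounded S :=
    isBounded_def.2 <| (hcoer.eventually_gt_atTop (J 0)).mono fun _ => not_le.2
  have hSconv : Convex ℝ S := by simpa only [mem_univ, true_and] using hJ.convex_le (J 0)
  have hK := isCompact_toWeakSpace_image hSb hSconv (isClosed_le hc continuous_const)
  obtain ⟨_, ⟨u, hu, rfl⟩, hmin⟩ :=
    (hJ.lowerSemicontinuous_comp_toWeakSpace_symm hc).lowerSemicontinuousOn _ |>.exists_isMinOn
      ⟨_, mem_image_of_mem _ (show (0 : H) ∈ S from le_refl (J 0))⟩ hK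
  refine ⟨u, fun v => ?_⟩
  by_cases hv : J v ≤ J 0
  · simpa using hmin (mem_image_of_mem _ hv)
  · exact hu.trans (not_le.1 hv).le

end InnerProductSpace

theorem stmt_15 {H : Type*} [NormedAddCommGroup H] [InnerProductSpace ℝ H] [CompleteSpace H]
    (J : H → ℝ) (hc : Continuous J) (hsc : StrictConvexOn ℝ Set.univ J)
    (hcoer : ∀ M : ℝ, ∃ R : ℝ, ∀ u : H, R < ‖u‖ → M < J u) :
    ∃! u : H, ∀ v : H, J u ≤ J v := by
  have hJ : Tendsto J (cobounded H) atTop := by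
    rw [← comap_norm_atTop, Filter.tendsto_atTop]
    intro M
    obtain ⟨R, hR⟩ := hcoer M
    exact (eventually_gt_atTop R).comap _ |>.mono fun u hu => (hR u hu).le
  obtain ⟨u, hu⟩ := hsc.convexOn.exists_forall_le_of_tendsto_cobounded hc hJ
  exact ⟨u, hu, fun v hv => hsc.eq_of_isMinOn (fun w _ => hv w) (fun w _ => hu w) trivial trivial⟩
end
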